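/- arXiv:math/0411234 — 2 statements merged into one kernel-verified Lean document; each statement's English description precedes it below -/
import Mathlib

section
/- With h and η(γ) = h(γ,e) as above, the cocycle b(g) = π(g)η - η satisfies ‖b(g)‖_p^p ≥ d(g,e) - 100δ for all g ∈ Γ; consequently ‖b(g)‖ → ∞ as g → ∞. -/
open Finset Filter

/-- The `ℓ^p` norm of a finitely supported function. -/
noncomputable def lpNorm {Γ : Type*} (p : ℝ) (f : Γ →₀ ℝ) : ℝ :=
    (∑ x ∈ f.support, |f x| ^ p) ^ (1 / p)

/-- For Mineyev's function `h` with unit norms and support condition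
`supp h(b,a) ⊆ B(q[b,a](10δ), δ) ∩ S(b, 10δ)` for `d(a,b) ≥ 10δ`, the cocycle
`b(g) = π(g)η - η` (where `η(γ) = h(γ,e)`, so `b(g)(γ) = h(γ,g) - h(γ,e)`) satisfies
`‖b(g)‖_p^p ≥ d(g,e) - 100δ`; consequently `‖b(g)‖ → ∞` as `g → ∞`. -/
theorem cocycle_lower_bound {Γ : Type*} [Group Γ] [Countable Γ]
    (d : Γ → Γ → ℕ)
    (hd0 : ∀ x y : Γ, d x y = 0 ↔ x = y)
    (hdsymm : ∀ x y : Γ, d x y = d y x)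
    (hdtri : ∀ x y z : Γ, d x z ≤ d x y + d y z)
    (hdproper : Tendsto (fun g : Γ => (d g 1 : ℝ)) cofinite atTop)
    (q : Γ → Γ → ℕ → Γ)
    (hq : ∀ (b a : Γ) (t : ℕ), t ≤ d b a →
      d b (q b a t) = t ∧ d (q b a t) a = d b a - t)
    (δ : ℕ) (hδ : 1 ≤ δ) (p : ℝ) (hp : 2 ≤ p)
    (h : Γ → Γ → (Γ →₀ ℝ))
    (hnorm : ∀ b a : Γ, lpNorm p (h b a) = 1)
    (hsupp : ∀ b a : Γ, 10 * δ ≤ d a b →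
      ∀ x ∈ (h b a).support, d x (q b a (10 * δ)) ≤ δ ∧ d b x = 10 * δ)
    (hsum : ∀ g : Γ, Summable (fun γ : Γ => (lpNorm p (h γ g - h γ 1)) ^ p)) :
    (∀ g : Γ, (d g 1 : ℝ) - 100 * δ ≤ ∑' γ : Γ, (lpNorm p (h γ g - h γ 1)) ^ p) ∧
    Tendsto (fun g : Γ => (∑' γ : Γ, (lpNorm p (h γ g - h γ 1)) ^ p) ^ (1 / p))
      cofinite atTop := by
  classical
  have hp0 : (0:ℝ) < p := by linarith
  have hpne : p ≠ 0 := ne_of_gt hp0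
  have hF0 : ∀ g γ : Γ, 0 ≤ (lpNorm p (h γ g - h γ 1)) ^ p := by
    intro g γ
    apply Real.rpow_nonneg
    unfold lpNorm
    positivity
  have hpow : ∀ f : Γ →₀ ℝ, (lpNorm p f) ^ p = ∑ x ∈ f.support, |f x| ^ p := by
    intro f
    unfold lpNorm
    rw [one_div, Real.rpow_inv_rpow (by positivity) hpne]
  have key : ∀ g γ : Γ, 10*δ ≤ d γ g → 10*δ ≤ d γ 1 → d g γ + d γ 1 = d g 1 →
      (1:ℝ) ≤ (lpNorm p (h γ g - h γ 1)) ^ p := by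
    intro g γ hγg hγ1 hgeo
    obtain ⟨hu1, hu2⟩ := hq γ g (10*δ) hγg
    obtain ⟨hv1, hv2⟩ := hq γ 1 (10*δ) hγ1
    have hduv : 20*δ ≤ d (q γ g (10*δ)) (q γ 1 (10*δ)) := by
      have h1 : d g 1 ≤ d g (q γ g (10*δ)) +
          (d (q γ g (10*δ)) (q γ 1 (10*δ)) + d (q γ 1 (10*δ)) 1) := by
        calc d g 1 ≤ d g (q γ g (10*δ)) + d (q γ g (10*δ)) 1 := hdtri _ _ _
        _ ≤ _ := by gcongr; exact hdtri _ _ _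
      have h2 : d g (q γ g (10*δ)) = d γ g - 10*δ := by rw [hdsymm]; exact hu2
      have h3 : d g γ = d γ g := hdsymm _ _
      omega
    have hdisj : ∀ x ∈ (h γ g).support, x ∉ (h γ 1).support := by
      intro x hx hx'
      obtain ⟨hxu, -⟩ := hsupp γ g (by rwa [hdsymm]) x hx
      obtain ⟨hxv, -⟩ := hsupp γ 1 (by rwa [hdsymm]) x hx'
      have h4 : d (q γ g (10*δ)) (q γ 1 (10*δ)) ≤
          d (q γ g (10*δ)) x + d x (q γ 1 (10*δ)) := hdtri _ _ _
      have h5 : d (q γ g (10*δ)) x = d x (q γ g (10*δ)) := hdsymm _ _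
      omega
    have hsub : (h γ g).support ⊆ (h γ g - h γ 1).support := by
      intro x hx
      have h1 : h γ 1 x = 0 := Finsupp.notMem_support_iff.mp (hdisj x hx)
      have h2 : h γ g x ≠ 0 := Finsupp.mem_support_iff.mp hx
      simp [Finsupp.mem_support_iff, Finsupp.sub_apply, h1, h2]
    rw [hpow]
    have h1 : ∑ x ∈ (h γ g).support, |(h γ g - h γ 1) x| ^ p ≤
        ∑ x ∈ (h γ g - h γ 1).support, |(h γ g - h γ 1) x| ^ p :=
      Finset.sum_le_sum_of_subset_of_nonneg hsub (fun x _ _ => by positivity)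
    have h2 : ∑ x ∈ (h γ g).support, |(h γ g - h γ 1) x| ^ p
        = ∑ x ∈ (h γ g).support, |h γ g x| ^ p := by
      apply Finset.sum_congr rfl
      intro x hx
      have : h γ 1 x = 0 := Finsupp.notMem_support_iff.mp (hdisj x hx)
      simp [Finsupp.sub_apply, this]
    have h3 : ∑ x ∈ (h γ g).support, |h γ g x| ^ p = 1 := by
      have h5 := hpow (h γ g)
      rw [hnorm γ g, Real.one_rpow] at h5
      linarith
    linarith
  have main : ∀ g : Γ, (d g 1 : ℝ) - 100 * δ ≤ ∑' γ : Γ, (lpNorm p (h γ g - h γ 1)) ^ p := by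
    intro g
    by_cases hD : d g 1 ≤ 100 * δ
    · have h1 : (d g 1 : ℝ) ≤ 100 * δ := by exact_mod_cast hD
      have h2 : (0:ℝ) ≤ ∑' γ : Γ, (lpNorm p (h γ g - h γ 1)) ^ p := tsum_nonneg (hF0 g)
      linarith
    · push_neg at hD
      set D := d g 1 with hDdef
      set T := Finset.Icc (10*δ) (D - 10*δ) with hT
      have hinj : ∀ a ∈ T, ∀ b ∈ T, q g 1 a = q g 1 b → a = b := by
        intro a ha b hb hab
        simp only [hT, Finset.mem_Icc] at ha hb
        have h1 := (hq g 1 a (by omega)).1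
        have h2 := (hq g 1 b (by omega)).1
        rw [hab] at h1
        omega
      have hsumS : ∑ γ ∈ T.image (q g 1), (lpNorm p (h γ g - h γ 1)) ^ p
          ≤ ∑' γ : Γ, (lpNorm p (h γ g - h γ 1)) ^ p :=
        Summable.sum_le_tsum _ (fun γ _ => hF0 g γ) (hsum g)
      have hcard : ∑ _t ∈ T, (1:ℝ) ≤ ∑ γ ∈ T.image (q g 1), (lpNorm p (h γ g - h γ 1)) ^ p := by
        rw [Finset.sum_image hinj]
        apply Finset.sum_le_sum
        intro t ht
        simp only [hT, Finset.mem_Icc] at ht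
        obtain ⟨h1, h2⟩ := hq g 1 t (by omega)
        have hsy : d (q g 1 t) g = t := by rw [hdsymm]; exact h1
        apply key
        · omega
        · omega
        · omega
      have hc : (D:ℝ) - 100*δ ≤ (T.card : ℝ) := by
        have h1 : D ≤ T.card + 100*δ := by
          simp only [hT, Nat.card_Icc]
          omega
        have h2 : (D:ℝ) ≤ (T.card : ℝ) + 100*δ := by exact_mod_cast h1
        linarith
      calc (D:ℝ) - 100*δ ≤ (T.card : ℝ) := hc
        _ = ∑ _t ∈ T, (1:ℝ) := by simp
        _ ≤ _ := hcard.trans hsumS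
  refine ⟨main, ?_⟩
  have h0 := tendsto_atTop_add_const_right cofinite (-(100*(δ:ℝ))) hdproper
  simp only [← sub_eq_add_neg] at h0
  have h1 : Tendsto (fun g : Γ => ∑' γ : Γ, (lpNorm p (h γ g - h γ 1)) ^ p) cofinite atTop :=
    tendsto_atTop_mono main h0
  exact (tendsto_rpow_atTop (by positivity : (0:ℝ) < 1/p)).comp h1
end

section
/- If f : Γ × Γ → C_0(Γ, ℚ) satisfies the Lipschitz-type estimate ‖f(b,a) - f(b,a')‖_1 ≤ L λ^{(a|a')_b} with 0 ≤ λ < 1, and each f(b,a) is supported in a set of cardinality at most N, then the ℓ^p-normalized h(b,a) = f(b,a)/‖f(b,a)‖_p (for f(b,a) a convex combination) satisfies ‖h(b,a) - h(b,a')‖_p ≤ C ρ^{(a|a')_b} for some C ≥ 0 and 0 ≤ ρ < 1. -/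
open Finset

/-- The `ℓ^1` norm of a finitely supported function. -/
noncomputable def l1Norm {Γ : Type*} (f : Γ →₀ ℝ) : ℝ :=
    ∑ x ∈ f.support, |f x|

theorem abs_inv_sub_inv_mul_le {a b : ℝ} (ha : 0 < a) (hb : 0 ≤ b) :
    |a⁻¹ - b⁻¹| * b ≤ |b - a| / a := by
  rcases hb.eq_or_lt with rfl | hb
  · simp only [mul_zero]
    positivity
  · rw [inv_sub_inv ha.ne' hb.ne', abs_div, abs_of_pos (mul_pos ha hb), div_mul_eq_mul_div,
      mul_div_mul_right _ _ hb.ne']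

theorem Seminorm.map_inv_smul_sub_inv_smul_le {E : Type*} [AddCommGroup E] [Module ℝ E]
    (q : Seminorm ℝ E) {u v : E} (hu : 0 < q u) :
    q ((q u)⁻¹ • u - (q v)⁻¹ • v) ≤ 2 * q (u - v) / q u := by
  have hsplit : (q u)⁻¹ • u - (q v)⁻¹ • v = (q u)⁻¹ • (u - v) + ((q u)⁻¹ - (q v)⁻¹) • v := by
    module
  have hnorm : |q v - q u| ≤ q (u - v) := by
    rw [abs_sub_comm]
    exact abs_sub_map_le_sub q u v
  calc q ((q u)⁻¹ • u - (q v)⁻¹ • v)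
      ≤ |(q u)⁻¹| * q (u - v) + |(q u)⁻¹ - (q v)⁻¹| * q v := by
        rw [hsplit]
        refine (map_add_le_add q _ _).trans ?_
        simp only [map_smul_eq_mul, Real.norm_eq_abs, le_refl]
    _ ≤ q (u - v) / q u + |q v - q u| / q u := by
        rw [abs_of_pos (inv_pos.mpr hu), inv_mul_eq_div]
        gcongr
        exact abs_inv_sub_inv_mul_le hu (apply_nonneg q v)
    _ ≤ 2 * q (u - v) / q u := by
        rw [← add_div, two_mul]
        gcongr

section LpNorm

variable {Γ : Type*} {p : ℝ}

theorem lpNorm_eq_of_support_subset (hp : 0 < p) (u : Γ →₀ ℝ) {s : Finset Γ}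
    (hs : u.support ⊆ s) : lpNorm p u = (∑ x ∈ s, |u x| ^ p) ^ (1 / p) := by
  unfold lpNorm
  congr 1
  refine sum_subset hs fun x _ hx => ?_
  rw [Finsupp.notMem_support_iff.mp hx, abs_zero, Real.zero_rpow hp.ne']

theorem lpNorm_nonneg (u : Γ →₀ ℝ) : 0 ≤ lpNorm p u := by
  unfold lpNorm
  positivity

theorem lpNorm_add_le (hp : 1 ≤ p) (u v : Γ →₀ ℝ) :
    lpNorm p (u + v) ≤ lpNorm p u + lpNorm p v := by
  classical
  have hp0 : 0 < p := one_pos.trans_le hp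
  rw [lpNorm_eq_of_support_subset hp0 _ Finsupp.support_add,
    lpNorm_eq_of_support_subset hp0 u subset_union_left,
    lpNorm_eq_of_support_subset hp0 v subset_union_right]
  exact Real.Lp_add_le _ u v hp

theorem lpNorm_smul (hp : 0 < p) (c : ℝ) (u : Γ →₀ ℝ) :
    lpNorm p (c • u) = |c| * lpNorm p u := by
  rw [lpNorm_eq_of_support_subset hp _ Finsupp.support_smul, lpNorm]
  simp_rw [Finsupp.smul_apply, smul_eq_mul, abs_mul,
    Real.mul_rpow (abs_nonneg _) (abs_nonneg _), ← mul_sum]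
  rw [Real.mul_rpow (by positivity) (by positivity), one_div,
    Real.rpow_rpow_inv (abs_nonneg c) hp.ne']

noncomputable def lpSeminorm (hp : 1 ≤ p) : Seminorm ℝ (Γ →₀ ℝ) :=
  Seminorm.of (lpNorm p) (lpNorm_add_le hp) (lpNorm_smul (one_pos.trans_le hp))

theorem lpSeminorm_apply (hp : 1 ≤ p) (u : Γ →₀ ℝ) : lpSeminorm hp u = lpNorm p u := rfl

theorem lpNorm_single (hp : 0 < p) (x : Γ) (c : ℝ) : lpNorm p (Finsupp.single x c) = |c| := by
  rw [lpNorm_eq_of_support_subset hp _ Finsupp.support_single_subset, sum_singleton,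
    Finsupp.single_eq_same, one_div, Real.rpow_rpow_inv (abs_nonneg c) hp.ne']

theorem lpNorm_le_l1Norm (hp : 1 ≤ p) (u : Γ →₀ ℝ) : lpNorm p u ≤ l1Norm u := by
  have hp0 : 0 < p := one_pos.trans_le hp
  calc lpNorm p u = lpSeminorm hp (∑ x ∈ u.support, Finsupp.single x (u x)) := by
        rw [← Finsupp.sum, Finsupp.sum_single, lpSeminorm_apply]
    _ ≤ ∑ x ∈ u.support, lpSeminorm hp (Finsupp.single x (u x)) :=
        le_sum_of_subadditive _ (map_zero _).le (map_add_le_add _) _ _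
    _ = l1Norm u := by simp only [lpSeminorm_apply, lpNorm_single hp0, l1Norm]

theorem abs_apply_le_lpNorm (hp : 0 < p) (u : Γ →₀ ℝ) (x : Γ) :
    |u x| ≤ lpNorm p u := by
  classical
  rw [lpNorm_eq_of_support_subset hp u (subset_insert x u.support)]
  calc |u x| = (|u x| ^ p) ^ (1 / p) := by
        rw [one_div, Real.rpow_rpow_inv (abs_nonneg _) hp.ne']
    _ ≤ (∑ y ∈ insert x u.support, |u y| ^ p) ^ (1 / p) := by
        gcongr
        exact single_le_sum (f := fun y => |u y| ^ p) (fun y _ => by positivity)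
          (mem_insert_self x u.support)

theorem l1Norm_le_card_mul_lpNorm (hp : 0 < p) (u : Γ →₀ ℝ) :
    l1Norm u ≤ #u.support * lpNorm p u := by
  classical
  simpa [l1Norm] using sum_le_card_nsmul u.support _ _ fun x _ => abs_apply_le_lpNorm hp u x

end LpNorm

theorem normalized_lipschitz_general {Γ : Type*} [MetricSpace Γ]
    (f : Γ → Γ → (Γ →₀ ℝ)) (N : ℕ)
    (hconv : ∀ b a : Γ, (∀ x, 0 ≤ f b a x) ∧ l1Norm (f b a) = 1)
    (hsupp : ∀ b a : Γ, (f b a).support.card ≤ N)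
    (L lam : ℝ) (hL : 0 ≤ L) (hlam0 : 0 ≤ lam) (hlam1 : lam < 1)
    (hlip : ∀ b a a' : Γ, l1Norm (f b a - f b a') ≤
      L * lam ^ ((dist b a + dist b a' - dist a a') / 2))
    (p : ℝ) (hp : 2 ≤ p) :
    ∃ (C ρ : ℝ), 0 ≤ C ∧ 0 ≤ ρ ∧ ρ < 1 ∧
      ∀ b a a' : Γ,
        lpNorm p ((lpNorm p (f b a))⁻¹ • f b a - (lpNorm p (f b a'))⁻¹ • f b a') ≤
          C * ρ ^ ((dist b a + dist b a' - dist a a') / 2) := by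
  have hp1 : 1 ≤ p := one_le_two.trans hp
  refine ⟨2 * N * L, lam, by positivity, hlam0, hlam1, fun b a a' => ?_⟩
  have hmass : 1 ≤ N * lpNorm p (f b a) := calc
    1 = l1Norm (f b a) := (hconv b a).2.symm
    _ ≤ #(f b a).support * lpNorm p (f b a) := l1Norm_le_card_mul_lpNorm (by linarith) _
    _ ≤ N * lpNorm p (f b a) := by gcongr; exacts [lpNorm_nonneg _, hsupp b a]
  have hpos : 0 < lpNorm p (f b a) :=
    pos_of_mul_pos_right (one_pos.trans_le hmass) N.cast_nonneg
  have hdiff := (lpNorm_le_l1Norm hp1 (f b a - f b a')).trans (hlip b a a')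
  simp only [← lpSeminorm_apply hp1] at hpos hmass hdiff ⊢
  calc _ ≤ 2 * lpSeminorm hp1 (f b a - f b a') / lpSeminorm hp1 (f b a) :=
        Seminorm.map_inv_smul_sub_inv_smul_le _ hpos
    _ ≤ 2 * N * lpSeminorm hp1 (f b a - f b a') := by
        rw [div_le_iff₀ hpos]
        nlinarith [apply_nonneg (lpSeminorm hp1) (f b a - f b a')]
    _ ≤ 2 * N * (L * lam ^ ((dist b a + dist b a' - dist a a') / 2)) := by gcongr
    _ = _ := by ring

/-- If `f : Γ × Γ → C_0(Γ)` takes convex-combination values supported on at most `N` points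
and satisfies `‖f(b,a) - f(b,a')‖_1 ≤ L λ^((a|a')_b)` with `0 ≤ λ < 1`, then the
`ℓ^p`-normalization `h(b,a) = f(b,a)/‖f(b,a)‖_p` satisfies
`‖h(b,a) - h(b,a')‖_p ≤ C ρ^((a|a')_b)` for some `C ≥ 0` and `0 ≤ ρ < 1`. -/
theorem normalized_lipschitz {Γ : Type*} [Group Γ] [MetricSpace Γ] [Countable Γ]
    (f : Γ → Γ → (Γ →₀ ℝ)) (N : ℕ) (hN : 1 ≤ N)
    (hconv : ∀ b a : Γ, (∀ x, 0 ≤ f b a x) ∧ l1Norm (f b a) = 1)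
    (hsupp : ∀ b a : Γ, (f b a).support.card ≤ N)
    (L lam : ℝ) (hL : 0 ≤ L) (hlam0 : 0 ≤ lam) (hlam1 : lam < 1)
    (hlip : ∀ b a a' : Γ, l1Norm (f b a - f b a') ≤
      L * lam ^ ((dist b a + dist b a' - dist a a') / 2))
    (p : ℝ) (hp : 2 ≤ p) :
    ∃ (C ρ : ℝ), 0 ≤ C ∧ 0 ≤ ρ ∧ ρ < 1 ∧
      ∀ b a a' : Γ,
        lpNorm p ((lpNorm p (f b a))⁻¹ • f b a - (lpNorm p (f b a'))⁻¹ • f b a') ≤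
          C * ρ ^ ((dist b a + dist b a' - dist a a') / 2) :=
  normalized_lipschitz_general f N hconv hsupp L lam hL hlam0 hlam1 hlip p hp
end
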